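/- arXiv:2401.05274 — 5 statements merged into one kernel-verified Lean document; each statement's English description precedes it below -/
import Mathlib

section
/- Let V be a finite-dimensional real vector space, W its complexification, and ρ : U → W a ℂ-linear map from a finite-dimensional complex vector space U, with decomposition ρ = ρ₁ + iρ₂ into real and imaginary parts (ρᵢ : U → V real-linear). Then dim_ℝ ker ρ₂ + dim_ℝ(im ρ₁ + im ρ₂) = dim_ℝ U. -/
open TensorProduct Module

/-- pointwise version of `real-rank A + rk_ℝ D = rk_ℝ A_ℝ`.
For a `ℂ`-linear map `ρ : U → ℂ ⊗ℝ V` between finite-dimensional spaces with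
decomposition `ρ = ρ₁ + i ρ₂` (`ρᵢ : U → V` real-linear), the real dimension of
`ker ρ₂` (the real elements) plus the real dimension of `D = im ρ₁ + im ρ₂`
equals the real dimension of `U`. -/
theorem stmt2 {U V : Type*} [AddCommGroup U] [Module ℝ U] [Module ℂ U]
    [IsScalarTower ℝ ℂ U] [FiniteDimensional ℂ U]
    [AddCommGroup V] [Module ℝ V] [FiniteDimensional ℝ V]
    (ρ : U →ₗ[ℂ] (ℂ ⊗[ℝ] V)) (ρ₁ ρ₂ : U →ₗ[ℝ] V)
    (h : ∀ u : U, ρ u = (1 : ℂ) ⊗ₜ[ℝ] ρ₁ u + (Complex.I) ⊗ₜ[ℝ] ρ₂ u) :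
    finrank ℝ (LinearMap.ker ρ₂) + finrank ℝ ↥(LinearMap.range ρ₁ ⊔ LinearMap.range ρ₂)
      = finrank ℝ U := by
  -- extraction of the imaginary part
  let g : (ℂ ⊗[ℝ] V) →ₗ[ℝ] V :=
    (TensorProduct.lid ℝ V).toLinearMap ∘ₗ LinearMap.rTensor V Complex.imLm
  have hg : ∀ (z : ℂ) (v : V), g (z ⊗ₜ[ℝ] v) = z.im • v := by
    intro z v
    simp [g]
  have key : ∀ u : U, ρ₂ (Complex.I • u) = ρ₁ u := by
    intro u
    have h1 : ρ (Complex.I • u) = Complex.I • ρ u := map_smul ρ _ _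
    rw [h (Complex.I • u), h u] at h1
    have h2 := congrArg g h1
    rw [map_add, hg, hg] at h2
    rw [smul_add, TensorProduct.smul_tmul', TensorProduct.smul_tmul'] at h2
    rw [map_add, hg, hg] at h2
    simpa [Complex.I_mul_I] using h2
  have hle : LinearMap.range ρ₁ ≤ LinearMap.range ρ₂ := by
    rintro v ⟨u, rfl⟩
    exact ⟨Complex.I • u, key u⟩
  have : FiniteDimensional ℝ U := FiniteDimensional.trans ℝ ℂ U
  rw [sup_of_le_right hle, add_comm]
  exact LinearMap.finrank_range_add_finrank_ker ρ₂
end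

section
/- If (A,ρ) is an involutive complex anchored vector bundle with constant real rank, then the real anchored vector bundle of real elements (A^re, ρ^re) is involutive: for sections α, β of A^re there exists a section γ of A^re with ρ^re(γ) = [ρ^re(α), ρ^re(β)]. -/
/-- If `(A, ρ)` is an involutive complex anchored vector bundle (with
constant real rank, so that the real elements form a real anchored vector bundle),
then the anchored bundle of real elements is involutive: for sections `α, β` whose
anchor images are real (fixed by the conjugation `σc` of complexified vector fields),
there is a section `γ` with real anchor image and `ρ γ = ⁅ρ α, ρ β⁆`.
Here the sections of `T_ℂ M` are modelled by a complex Lie algebra `L` equipped with a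
conjugation `σc` (an involutive, antilinear Lie algebra automorphism), and `ρ^re` is the
restriction of the real part of `ρ` to real elements. -/
theorem stmt3 {Γ L : Type*} [AddCommGroup Γ] [Module ℂ Γ]
    [LieRing L] [LieAlgebra ℂ L] [Module ℝ L] [IsScalarTower ℝ ℂ L]
    (σc : L →ₗ[ℝ] L)
    (hσσ : ∀ x : L, σc (σc x) = x)
    (hσsm : ∀ (z : ℂ) (x : L), σc (z • x) = (starRingEnd ℂ) z • σc x)
    (hσbr : ∀ x y : L, σc ⁅x, y⁆ = ⁅σc x, σc y⁆)
    (ρ : Γ →ₗ[ℂ] L)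
    (hinv : ∀ α β : Γ, ∃ γ : Γ, ρ γ = ⁅ρ α, ρ β⁆) :
    ∀ α β : Γ, σc (ρ α) = ρ α → σc (ρ β) = ρ β →
      ∃ γ : Γ, σc (ρ γ) = ρ γ ∧ ρ γ = ⁅ρ α, ρ β⁆ := by
  intro α β hα hβ
  obtain ⟨γ, hγ⟩ := hinv α β
  exact ⟨γ, by rw [hγ, hσbr, hα, hβ], hγ⟩
end

section
/- For a complex Lie algebroid A of constant real rank with A_min regular, at each point m ∈ M: type A|_m = rk_ℂ A − rk_ℂ A_min|_m, where type A|_m = ½(dim D|_m − dim Δ|_m). -/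
open Module

section Aux

variable {W : Type*} [AddCommGroup W] [Module ℝ W] [Module ℂ W]
    [IsScalarTower ℝ ℂ W]

lemma aux_decomp (v w : W) :
    (2⁻¹ : ℝ) • (v + w) + Complex.I • ((-(2⁻¹) : ℝ) • (Complex.I • (v - w))) = v := by
  rw [smul_comm Complex.I, smul_smul, Complex.I_mul_I, neg_one_smul, smul_neg, neg_smul, neg_neg]
  module

lemma aux_fix1 (σc : W →ₗ[ℝ] W) (hσσ : ∀ w : W, σc (σc w) = w) (v : W) :
    σc ((2⁻¹ : ℝ) • (v + σc v)) = (2⁻¹ : ℝ) • (v + σc v) := by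
  rw [map_smul, map_add, hσσ, add_comm]

lemma aux_fix2 (σc : W →ₗ[ℝ] W) (hσσ : ∀ w : W, σc (σc w) = w)
    (hσsm : ∀ (z : ℂ) (w : W), σc (z • w) = (starRingEnd ℂ) z • σc w) (v : W) :
    σc ((-(2⁻¹) : ℝ) • (Complex.I • (v - σc v)))
      = (-(2⁻¹) : ℝ) • (Complex.I • (v - σc v)) := by
  have inner : (-Complex.I) • (σc v - v) = Complex.I • (v - σc v) := by
    rw [neg_smul, ← smul_neg, neg_sub]
  rw [map_smul, hσsm, Complex.conj_I, map_sub, hσσ, inner]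

variable [FiniteDimensional ℝ W]

lemma aux_fd (V : Submodule ℂ W) : FiniteDimensional ℂ V := by
  have : FiniteDimensional ℝ V := (inferInstance : FiniteDimensional ℝ (V.restrictScalars ℝ))
  exact FiniteDimensional.right ℝ ℂ V

omit [FiniteDimensional ℝ W] in
lemma aux_two (V : Submodule ℂ W) :
    finrank ℝ (V.restrictScalars ℝ) = 2 * finrank ℂ V := by
  rw [show finrank ℝ (V.restrictScalars ℝ) = finrank ℝ V from rfl,
    ← finrank_mul_finrank ℝ ℂ (↥V), Complex.finrank_real_complex]

lemma aux_real_points (σc : W →ₗ[ℝ] W)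
    (hσσ : ∀ w : W, σc (σc w) = w)
    (hσsm : ∀ (z : ℂ) (w : W), σc (z • w) = (starRingEnd ℂ) z • σc w)
    (V : Submodule ℂ W) (hst : ∀ w ∈ V, σc w ∈ V) :
    finrank ℝ (V.restrictScalars ℝ ⊓ LinearMap.ker (σc - LinearMap.id) : Submodule ℝ W)
      = finrank ℂ V := by
  set Fr : Submodule ℝ W := LinearMap.ker (σc - LinearMap.id) with hFr
  have hmemF : ∀ w : W, w ∈ Fr ↔ σc w = w := by
    intro w
    simp [hFr, LinearMap.mem_ker, sub_eq_zero]
  set Δ' : Submodule ℝ W := V.restrictScalars ℝ ⊓ Fr with hΔ'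
  let φ : (Δ' × Δ') →ₗ[ℝ] W :=
    { toFun := fun p => (p.1 : W) + Complex.I • (p.2 : W)
      map_add' := by
        intro p q
        simp only [Submodule.coe_add, Prod.fst_add, Prod.snd_add, smul_add]
        abel
      map_smul' := by
        intro r p
        simp only [Prod.smul_fst, Prod.smul_snd, SetLike.val_smul, RingHom.id_apply, smul_add,
          smul_comm r Complex.I] }
  have hinj : Function.Injective φ := by
    rw [← LinearMap.ker_eq_bot, Submodule.eq_bot_iff]
    rintro ⟨a, b⟩ hab
    have h0 : (a : W) + Complex.I • (b : W) = 0 := hab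
    have ha' : σc (a : W) = a := (hmemF a).mp a.2.2
    have hb' : σc (b : W) = b := (hmemF b).mp b.2.2
    have h1 : (a : W) + -(Complex.I • (b : W)) = 0 := by
      have h := congrArg σc h0
      rwa [map_add, hσsm, ha', hb', Complex.conj_I, neg_smul, map_zero] at h
    have ha0 : (a : W) = 0 := by
      have : (2 : ℝ) • (a : W) = 0 := by
        rw [two_smul]
        calc (a : W) + a
            = ((a : W) + Complex.I • (b : W)) + ((a : W) + -(Complex.I • (b : W))) := by abel
          _ = 0 := by rw [h0, h1, add_zero]
      have h3 := congrArg (fun x => (2⁻¹ : ℝ) • x) this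
      simpa [smul_smul] using h3
    have hb0 : (b : W) = 0 := by
      have : Complex.I • (b : W) = 0 := by rw [ha0, zero_add] at h0; exact h0
      rcases smul_eq_zero.mp this with h | h
      · exact absurd h Complex.I_ne_zero
      · exact h
    ext
    · exact ha0
    · exact hb0
  have hrange : LinearMap.range φ = V.restrictScalars ℝ := by
    apply le_antisymm
    · rintro _ ⟨⟨a, b⟩, rfl⟩
      show (a : W) + Complex.I • (b : W) ∈ V
      exact V.add_mem a.2.1 (V.smul_mem _ b.2.1)
    · intro v hv
      have hv' : v ∈ V := hv
      have hσv : σc v ∈ V := hst v hv'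
      have haV : (2⁻¹ : ℝ) • (v + σc v) ∈ V :=
        (V.restrictScalars ℝ).smul_mem _ (V.add_mem hv' hσv)
      have haF : (2⁻¹ : ℝ) • (v + σc v) ∈ Fr := (hmemF _).mpr (aux_fix1 σc hσσ v)
      have hbV : (-(2⁻¹) : ℝ) • (Complex.I • (v - σc v)) ∈ V :=
        (V.restrictScalars ℝ).smul_mem _ (V.smul_mem _ (V.sub_mem hv' hσv))
      have hbF : (-(2⁻¹) : ℝ) • (Complex.I • (v - σc v)) ∈ Fr :=
        (hmemF _).mpr (aux_fix2 σc hσσ hσsm v)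
      exact ⟨⟨⟨_, ⟨haV, haF⟩⟩, ⟨_, ⟨hbV, hbF⟩⟩⟩, aux_decomp v (σc v)⟩
  have h1 : finrank ℝ (V.restrictScalars ℝ) = 2 * finrank ℝ Δ' := by
    rw [← hrange, LinearMap.finrank_range_of_inj hinj, finrank_prod, two_mul]
  have h2 := aux_two V
  omega

end Aux

/-- pointwise version of `type A|_m = rk_ℂ A − rk_ℂ A_min|_m`.
`W` models the fiber of `T_ℂ M` with conjugation `σc`; `F` is the real subspace `TM`;
`ρ : U → W` is the anchor, `Δ = Re(ρ(U) ∩ conj ρ(U))`, `D = Re(ρ(U) + conj ρ(U))`,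
`A_min = ρ⁻¹(Δ_ℂ)` with `Δ_ℂ` the complex span of `Δ`, and
`type = ½(dim_ℝ D − dim_ℝ Δ)`. -/
theorem stmt8 {U W : Type*} [AddCommGroup U] [Module ℝ U] [Module ℂ U]
    [IsScalarTower ℝ ℂ U] [FiniteDimensional ℂ U]
    [AddCommGroup W] [Module ℝ W] [Module ℂ W] [IsScalarTower ℝ ℂ W]
    [FiniteDimensional ℝ W]
    (σc : W →ₗ[ℝ] W)
    (hσσ : ∀ w : W, σc (σc w) = w)
    (hσsm : ∀ (z : ℂ) (w : W), σc (z • w) = (starRingEnd ℂ) z • σc w)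
    (ρ : U →ₗ[ℂ] W) :
    let F : Submodule ℝ W := LinearMap.ker (σc - LinearMap.id)
    let rngρ : Submodule ℝ W := LinearMap.range (ρ.restrictScalars ℝ)
    let Δ : Submodule ℝ W := rngρ ⊓ F
    let D : Submodule ℝ W := (rngρ ⊔ rngρ.map σc) ⊓ F
    let Amin : Submodule ℂ U := (Submodule.span ℂ (Δ : Set W)).comap ρ
    finrank ℝ D - finrank ℝ Δ = 2 * (finrank ℂ U - finrank ℂ Amin) := by
  intro F rngρ Δ D Amin
  haveI : RingHomSurjective (starRingEnd ℂ) := ⟨fun z => ⟨(starRingEnd ℂ) z, by simp⟩⟩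
  have hmemF : ∀ w : W, w ∈ F ↔ σc w = w := by
    intro w
    simp [F, LinearMap.mem_ker, sub_eq_zero]
  let σ' : W →ₛₗ[starRingEnd ℂ] W :=
    { toFun := σc, map_add' := σc.map_add, map_smul' := fun z w => hσsm z w }
  set R : Submodule ℂ W := LinearMap.range ρ with hR
  set S : Submodule ℂ W := R.map σ' with hS
  haveI := aux_fd R
  haveI := aux_fd S
  haveI := aux_fd (R ⊓ S)
  haveI := aux_fd (R ⊔ S)
  -- basic translations
  have hRr : rngρ = R.restrictScalars ℝ := by
    ext w
    simp [rngρ, hR, LinearMap.mem_range]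
  have hSmem : ∀ w : W, w ∈ S ↔ ∃ x ∈ R, σc x = w := by
    intro w
    simp only [hS, Submodule.mem_map]
    rfl
  have hSR : ∀ w : W, w ∈ S → σc w ∈ R := by
    intro w hw
    rcases (hSmem w).mp hw with ⟨x, hx, rfl⟩
    rwa [hσσ]
  have hRS : ∀ w : W, w ∈ R → σc w ∈ S := by
    intro w hw
    exact (hSmem _).mpr ⟨w, hw, rfl⟩
  have hSr : rngρ.map σc = S.restrictScalars ℝ := by
    ext w
    simp only [Submodule.mem_map, Submodule.restrictScalars_mem, hSmem, hRr]
  -- stability of R ⊓ S and R ⊔ S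
  have hstT : ∀ w ∈ R ⊓ S, σc w ∈ R ⊓ S := by
    rintro w ⟨hwR, hwS⟩
    exact ⟨hSR w hwS, hRS w hwR⟩
  have hstP : ∀ w ∈ R ⊔ S, σc w ∈ R ⊔ S := by
    intro w hw
    rcases Submodule.mem_sup.mp hw with ⟨y, hy, z, hz, rfl⟩
    rw [map_add]
    exact Submodule.add_mem _ (Submodule.mem_sup_right (hRS y hy))
      (Submodule.mem_sup_left (hSR z hz))
  -- Δ description
  have hΔsub : (Δ : Set W) ⊆ ((R ⊓ S : Submodule ℂ W) : Set W) := by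
    rintro w ⟨hwr, hwF⟩
    have hwR : w ∈ R := by rw [hRr] at hwr; exact hwr
    have hσw : σc w = w := (hmemF w).mp hwF
    refine ⟨hwR, ?_⟩
    rw [← hσw]
    exact hRS w hwR
  have hspan : Submodule.span ℂ (Δ : Set W) = R ⊓ S := by
    apply le_antisymm
    · exact Submodule.span_le.mpr hΔsub
    · rintro v ⟨hvR, hvS⟩
      have hσvR : σc v ∈ R := hSR v hvS
      have haΔ : (2⁻¹ : ℝ) • (v + σc v) ∈ Δ := by
        refine ⟨?_, (hmemF _).mpr (aux_fix1 σc hσσ v)⟩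
        rw [hRr]
        exact (R.restrictScalars ℝ).smul_mem _ (R.add_mem hvR hσvR)
      have hbΔ : (-(2⁻¹) : ℝ) • (Complex.I • (v - σc v)) ∈ Δ := by
        refine ⟨?_, (hmemF _).mpr (aux_fix2 σc hσσ hσsm v)⟩
        rw [hRr]
        exact (R.restrictScalars ℝ).smul_mem _ (R.smul_mem Complex.I (R.sub_mem hvR hσvR))
      rw [← aux_decomp v (σc v)]
      exact Submodule.add_mem _ (Submodule.subset_span haΔ)
        (Submodule.smul_mem _ _ (Submodule.subset_span hbΔ))
  -- identify Δ and D with real points of R ⊓ S and R ⊔ S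
  have hΔeq : Δ = (R ⊓ S).restrictScalars ℝ ⊓ F := by
    apply le_antisymm
    · intro w hw
      exact ⟨hΔsub hw, hw.2⟩
    · rintro w ⟨hw1, hw2⟩
      refine ⟨?_, hw2⟩
      rw [hRr]
      exact hw1.1
  have hDeq : D = (R ⊔ S).restrictScalars ℝ ⊓ F := by
    have hsup : rngρ ⊔ rngρ.map σc = (R ⊔ S).restrictScalars ℝ := by
      ext w
      rw [Submodule.mem_sup, Submodule.restrictScalars_mem, Submodule.mem_sup]
      constructor
      · rintro ⟨y, hy, z, hz, rfl⟩
        refine ⟨y, ?_, z, ?_, rfl⟩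
        · rw [hRr] at hy; exact hy
        · rw [hSr] at hz; exact hz
      · rintro ⟨y, hy, z, hz, rfl⟩
        refine ⟨y, ?_, z, ?_, rfl⟩
        · rw [hRr]; exact hy
        · rw [hSr]; exact hz
    rw [show D = (rngρ ⊔ rngρ.map σc) ⊓ F from rfl, hsup]
  -- dimension computations
  have e1 : finrank ℝ Δ = finrank ℂ (R ⊓ S : Submodule ℂ W) := by
    rw [hΔeq]
    exact aux_real_points σc hσσ hσsm _ hstT
  have e2 : finrank ℝ D = finrank ℂ (R ⊔ S : Submodule ℂ W) := by
    rw [hDeq]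
    exact aux_real_points σc hσσ hσsm _ hstP
  have e3 : finrank ℂ (R ⊔ S : Submodule ℂ W) + finrank ℂ (R ⊓ S : Submodule ℂ W)
      = finrank ℂ R + finrank ℂ S := Submodule.finrank_sup_add_finrank_inf_eq R S
  have e4 : finrank ℂ S = finrank ℂ R := by
    have hinv : Function.Involutive σc := hσσ
    let e : W ≃ₗ[ℝ] W := LinearEquiv.ofInvolutive σc hinv
    have h1 : finrank ℝ (rngρ.map σc) = finrank ℝ rngρ := by
      rw [show rngρ.map σc = rngρ.map (e : W →ₗ[ℝ] W) from rfl]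
      exact LinearEquiv.finrank_map_eq e rngρ
    rw [hSr, hRr] at h1
    have h2 := aux_two S
    have h3 := aux_two R
    omega
  have e5 : finrank ℂ (R ⊓ S : Submodule ℂ W) ≤ finrank ℂ R :=
    Submodule.finrank_mono inf_le_left
  have e6 : finrank ℂ R + finrank ℂ (LinearMap.ker ρ) = finrank ℂ U :=
    LinearMap.finrank_range_add_finrank_ker ρ
  -- Amin dimension
  have hker_le : LinearMap.ker ρ ≤ Amin := by
    intro x hx
    have hx0 : ρ x = 0 := hx
    show ρ x ∈ Submodule.span ℂ (Δ : Set W)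
    rw [hx0]
    exact Submodule.zero_mem _
  have e7 : finrank ℂ Amin = finrank ℂ (R ⊓ S : Submodule ℂ W)
      + finrank ℂ (LinearMap.ker ρ) := by
    have hrn := LinearMap.finrank_range_add_finrank_ker (ρ.domRestrict Amin)
    have hrange : LinearMap.range (ρ.domRestrict Amin) = R ⊓ S := by
      rw [LinearMap.range_domRestrict, show Amin = (Submodule.span ℂ (Δ : Set W)).comap ρ
        from rfl, Submodule.map_comap_eq, hspan, ← hR]
      exact inf_eq_right.mpr inf_le_left
    have hker : finrank ℂ (LinearMap.ker (ρ.domRestrict Amin))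
        = finrank ℂ (LinearMap.ker ρ) := by
      rw [LinearMap.ker_domRestrict]
      exact LinearEquiv.finrank_eq (Submodule.comapSubtypeEquivOfLe hker_le)
    rw [hrange, hker] at hrn
    omega
  omega
end

section
/- For a complex Lie algebroid A at a point m: 2·type A|_m + class A|_m + realrank A|_m = rk_ℝ A_ℝ, where type A|_m = ½(dim_ℝ D|_m − dim_ℝ Δ|_m), class A|_m = dim_ℝ Δ|_m, and realrank A|_m = dim_ℝ A^re|_m. -/
open Module

/-- pointwise version of `2·type + class + realrank = rk_ℝ A_ℝ`.
With `W` the fiber of `T_ℂ M`, conjugation `σc`, real part `F`, anchor `ρ : U → W`,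
`Δ = Re(ρ(U) ∩ conj ρ(U))`, `D = Re(ρ(U) + conj ρ(U))`, `A^re = ρ⁻¹(F)`:
`2 type = dim_ℝ D − dim_ℝ Δ`, `class = dim_ℝ Δ`, `realrank = dim_ℝ A^re`, and
`rk_ℝ A_ℝ = 2 dim_ℂ U`. -/
theorem stmt9 {U W : Type*} [AddCommGroup U] [Module ℝ U] [Module ℂ U]
    [IsScalarTower ℝ ℂ U] [FiniteDimensional ℂ U]
    [AddCommGroup W] [Module ℝ W] [Module ℂ W] [IsScalarTower ℝ ℂ W]
    [FiniteDimensional ℝ W]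
    (σc : W →ₗ[ℝ] W)
    (hσσ : ∀ w : W, σc (σc w) = w)
    (hσsm : ∀ (z : ℂ) (w : W), σc (z • w) = (starRingEnd ℂ) z • σc w)
    (ρ : U →ₗ[ℂ] W) :
    let F : Submodule ℝ W := LinearMap.ker (σc - LinearMap.id)
    let rngρ : Submodule ℝ W := LinearMap.range (ρ.restrictScalars ℝ)
    let Δ : Submodule ℝ W := rngρ ⊓ F
    let D : Submodule ℝ W := (rngρ ⊔ rngρ.map σc) ⊓ F
    let Are : Submodule ℝ U := F.comap (ρ.restrictScalars ℝ)
    (finrank ℝ D - finrank ℝ Δ) + finrank ℝ Δ + finrank ℝ Are = 2 * finrank ℂ U := by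
  intro F rngρ Δ D Are
  haveI : FiniteDimensional ℝ U := Module.Finite.trans ℂ U
  have hr : ∀ x : U, (ρ.restrictScalars ℝ) x = ρ x := fun _ => rfl
  have hmemF : ∀ w : W, w ∈ F ↔ σc w = w := by
    intro w
    simp only [F, LinearMap.mem_ker, LinearMap.sub_apply, LinearMap.id_apply, sub_eq_zero]
  have hΔD : Δ ≤ D := inf_le_inf_right F le_sup_left
  -- ψ = (σ + id) ∘ ρ, as a real-linear map
  set ψ : U →ₗ[ℝ] W := (σc + LinearMap.id).comp (ρ.restrictScalars ℝ) with hψ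
  have hψapp : ∀ u : U, ψ u = σc (ρ u) + ρ u := by intro u; simp [hψ, hr]
  have hmemker : ∀ u : U, u ∈ LinearMap.ker ψ ↔ σc (ρ u) + ρ u = 0 := by
    intro u; rw [LinearMap.mem_ker, hψapp]
  -- range ψ = D
  have hrange : LinearMap.range ψ = D := by
    apply le_antisymm
    · rintro w ⟨u, rfl⟩
      refine Submodule.mem_inf.mpr ⟨?_, ?_⟩
      · rw [hψapp]
        exact add_mem
          (Submodule.mem_sup_right (Submodule.mem_map_of_mem ⟨u, rfl⟩))
          (Submodule.mem_sup_left ⟨u, rfl⟩)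
      · rw [hmemF, hψapp, map_add, hσσ]
        abel
    · rintro w hw
      obtain ⟨hw1, hw2⟩ := Submodule.mem_inf.mp hw
      have hσw := (hmemF _).mp hw2
      obtain ⟨a, ha, b, hb, rfl⟩ := Submodule.mem_sup.mp hw1
      obtain ⟨u, rfl⟩ := ha
      obtain ⟨b', ⟨v, rfl⟩, rfl⟩ := hb
      rw [hr, hr] at *
      refine ⟨(1/2 : ℝ) • (u + v), ?_⟩
      have h1 : σc (ρ u) + ρ v = ρ u + σc (ρ v) := by
        simpa [map_add, hσσ] using hσw
      have h2 : ψ ((1/2 : ℝ) • (u + v))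
          = (1/2 : ℝ) • ((σc (ρ u) + ρ v) + (ρ u + σc (ρ v))) := by
        rw [map_smul, hψapp]
        simp only [map_add, LinearMap.map_add, hr]
        congr 1
        abel
      rw [h2, h1, ← two_smul ℝ, smul_smul]
      norm_num
  -- ker ψ ≃ Are via multiplication by I
  have hI : (Complex.I : ℂ) ≠ 0 := Complex.I_ne_zero
  set e : U ≃ₗ[ℝ] U :=
    (LinearEquiv.smulOfNeZero ℂ U Complex.I hI).restrictScalars ℝ with he_def
  have he : ∀ x : U, e x = Complex.I • x := fun _ => rfl
  have hker : (LinearMap.ker ψ).map (e : U →ₗ[ℝ] U) = Are := by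
    ext u
    rw [Submodule.mem_map]
    constructor
    · rintro ⟨v, hv, rfl⟩
      have hv' : σc (ρ v) = -ρ v :=
        eq_neg_of_add_eq_zero_left ((hmemker v).mp hv)
      show (ρ.restrictScalars ℝ) (e v) ∈ F
      rw [hr, hmemF]
      have : ρ (e v) = Complex.I • ρ v := by
        rw [he]; exact map_smul ρ _ _
      rw [this, hσsm, Complex.conj_I, hv']
      simp
    · intro hu
      have hu' : σc (ρ u) = ρ u := by
        have : (ρ.restrictScalars ℝ) u ∈ F := hu
        rwa [hr, hmemF] at this
      refine ⟨(-Complex.I) • u, ?_, ?_⟩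
      · rw [hmemker, map_smul, hσsm, hu']
        rw [show (starRingEnd ℂ) (-Complex.I) = Complex.I by simp [Complex.conj_I]]
        rw [neg_smul, add_neg_cancel]
      · rw [LinearEquiv.coe_coe, he, smul_smul]
        simp [Complex.I_mul_I]
  have hAre : finrank ℝ Are = finrank ℝ (LinearMap.ker ψ) := by
    rw [← hker]
    exact LinearEquiv.finrank_map_eq e _
  have hrn : finrank ℝ (LinearMap.range ψ) + finrank ℝ (LinearMap.ker ψ) = finrank ℝ U :=
    LinearMap.finrank_range_add_finrank_ker ψ
  have hU : finrank ℝ U = 2 * finrank ℂ U := by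
    rw [← finrank_mul_finrank ℝ ℂ U, Complex.finrank_real_complex]
  have hsub : finrank ℝ D - finrank ℝ Δ + finrank ℝ Δ = finrank ℝ D :=
    Nat.sub_add_cancel (Submodule.finrank_mono hΔD)
  rw [hsub, hAre, ← hrange, hrn, hU]
end

section
/- Any complex Lie algebroid structure ([·,·], ρ) on the complexification A_ℂ of a real vector bundle A arises as the complex sum of a complex matched pair of skew-algebroid structures on A: defining ρ₁, ρ₂ : A → TM by ρ(a) = ρ₁(a) + iρ₂(a) and [·,·]₁, [·,·]₂ : Γ(A)×Γ(A) → Γ(A) by [a,b] = [a,b]₁ + i[a,b]₂ for real sections a,b, the triples (A,[·,·]₁,ρ₁) and (A,[·,·]₂,ρ₂) are skew-algebroids (each satisfying its own Leibniz identity), they commute, and Jac[·,·]₁ = Jac[·,·]₂. -/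
/-- Complex scalar multiplication of a complex function on a complexified section. -/
def csmul {S Γ : Type*} [CommRing S] [AddCommGroup Γ] [Module S Γ]
    (f : S × S) (α : Γ × Γ) : Γ × Γ :=
  (f.1 • α.1 - f.2 • α.2, f.1 • α.2 + f.2 • α.1)

/-- The `ℂ`-bilinear extension to `A_ℂ` of a pair of brackets on real sections. -/
def cbr {Γ : Type*} [AddCommGroup Γ] (b₁ b₂ : Γ → Γ → Γ) (α β : Γ × Γ) : Γ × Γ :=
  (b₁ α.1 β.1 - b₂ α.1 β.2 - b₂ α.2 β.1 - b₁ α.2 β.2,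
   b₂ α.1 β.1 + b₁ α.1 β.2 + b₁ α.2 β.1 - b₂ α.2 β.2)

/-- The anchor of a complex sum. -/
def canchor {S Γ : Type*} [CommRing S] [Algebra ℝ S]
    (r₁ r₂ : Γ → Derivation ℝ S S) (α : Γ × Γ) :
    Derivation ℝ S S × Derivation ℝ S S :=
  (r₁ α.1 - r₂ α.2, r₁ α.2 + r₂ α.1)

/-- Action of a complex vector field on a complex function. -/
def cvf {S : Type*} [CommRing S] [Algebra ℝ S]
    (Z : Derivation ℝ S S × Derivation ℝ S S) (f : S × S) : S × S :=
  (Z.1 f.1 - Z.2 f.2, Z.1 f.2 + Z.2 f.1)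

/-- Lie bracket of complex vector fields. -/
def cvfbr {S : Type*} [CommRing S] [Algebra ℝ S]
    (Z W : Derivation ℝ S S × Derivation ℝ S S) :
    Derivation ℝ S S × Derivation ℝ S S :=
  (⁅Z.1, W.1⁆ - ⁅Z.2, W.2⁆, ⁅Z.1, W.2⁆ + ⁅Z.2, W.1⁆)

/-- any complex Lie algebroid structure `(B, P)` on the complexification
`A_ℂ = A ⊕ iA` of a real vector bundle `A` (sections `Γ × Γ`) arises as the complex sum
of a complex matched pair of skew-algebroids on `A`: the real/imaginary parts
`b₁, b₂` of the bracket on real sections and `r₁, r₂` of the anchor on real sections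
satisfy their own Leibniz identities and antisymmetry (skew-algebroids), they commute,
they have equal Jacobiators, and `B`, `P` are recovered as the complex sum. -/
theorem stmt16 {S Γ : Type*} [CommRing S] [Algebra ℝ S] [AddCommGroup Γ] [Module S Γ]
    (B : Γ × Γ → Γ × Γ → Γ × Γ)
    (P : Γ × Γ → Derivation ℝ S S × Derivation ℝ S S)
    (hBanti : ∀ α β : Γ × Γ, B α β = - B β α)
    (hBaddl : ∀ α β γ : Γ × Γ, B (α + β) γ = B α γ + B β γ)
    (hBaddr : ∀ α β γ : Γ × Γ, B α (β + γ) = B α β + B α γ)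
    (hBJac : ∀ α β γ : Γ × Γ, B α (B β γ) + B β (B γ α) + B γ (B α β) = 0)
    (hBLeib : ∀ (α β : Γ × Γ) (f : S × S),
      B α (csmul f β) = csmul f (B α β) + csmul (cvf (P α) f) β)
    (hPadd : ∀ α β : Γ × Γ, P (α + β) = P α + P β)
    (hPsm : ∀ (f : S × S) (α : Γ × Γ),
      P (csmul f α) = (f.1 • (P α).1 - f.2 • (P α).2, f.1 • (P α).2 + f.2 • (P α).1))
    (hPbr : ∀ α β : Γ × Γ, P (B α β) = cvfbr (P α) (P β)) :
    ∀ (b₁ b₂ : Γ → Γ → Γ) (r₁ r₂ : Γ → Derivation ℝ S S),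
      (∀ a c : Γ, b₁ a c = (B (a, 0) (c, 0)).1) →
      (∀ a c : Γ, b₂ a c = (B (a, 0) (c, 0)).2) →
      (∀ a : Γ, r₁ a = (P (a, 0)).1) →
      (∀ a : Γ, r₂ a = (P (a, 0)).2) →
      -- (A, [·,·]₁, ρ₁) and (A, [·,·]₂, ρ₂) are skew-algebroids:
      (∀ a c : Γ, b₁ a c = - b₁ c a) ∧
      (∀ a c : Γ, b₂ a c = - b₂ c a) ∧
      (∀ (a c : Γ) (f : S), b₁ a (f • c) = f • b₁ a c + (r₁ a f) • c) ∧
      (∀ (a c : Γ) (f : S), b₂ a (f • c) = f • b₂ a c + (r₂ a f) • c) ∧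
      -- the brackets commute:
      (∀ a b c : Γ,
        (b₂ a (b₁ b c) + b₂ b (b₁ c a) + b₂ c (b₁ a b))
          + (b₁ a (b₂ b c) + b₁ b (b₂ c a) + b₁ c (b₂ a b)) = 0) ∧
      -- equal Jacobiators:
      (∀ a b c : Γ,
        b₁ a (b₁ b c) + b₁ b (b₁ c a) + b₁ c (b₁ a b)
          = b₂ a (b₂ b c) + b₂ b (b₂ c a) + b₂ c (b₂ a b)) ∧
      -- the complex Lie algebroid structure is the complex sum of this pair:
      (∀ α β : Γ × Γ, B α β = cbr b₁ b₂ α β) ∧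
      (∀ α : Γ × Γ, P α = canchor r₁ r₂ α) := by

  intro b₁ b₂ r₁ r₂ hb₁ hb₂ hr₁ hr₂
  -- B α of the imaginary rotation
  have hBi : ∀ (α : Γ × Γ) (d : Γ),
      B α (0, d) = (-(B α (d, 0)).2, (B α (d, 0)).1) := by
    intro α d
    have h := hBLeib α (d, 0) ((0 : S), (1 : S))
    simp [csmul, cvf] at h
    simpa [csmul] using h
  have hBl : ∀ (b : Γ) (β : Γ × Γ),
      B (0, b) β = (-(B (b, 0) β).2, (B (b, 0) β).1) := by
    intro b β
    rw [hBanti, hBi β b, hBanti β (b, 0)]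
    simp
  have hPi : ∀ (b : Γ), P (0, b) = (-(P (b, 0)).2, (P (b, 0)).1) := by
    intro b
    have h := hPsm ((0 : S), (1 : S)) (b, 0)
    simp [csmul] at h
    simpa using h
  -- the complex sum formulas
  have hBsum : ∀ α β : Γ × Γ, B α β = cbr b₁ b₂ α β := by
    rintro ⟨a, b⟩ ⟨c, d⟩
    have e1 : ((a, b) : Γ × Γ) = (a, 0) + (0, b) := by simp
    have e2 : ((c, d) : Γ × Γ) = (c, 0) + (0, d) := by simp
    rw [e1, e2, hBaddl, hBaddr, hBaddr]
    simp only [hBi, hBl]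
    ext <;> simp [cbr, hb₁, hb₂] <;> abel
  have hPsum : ∀ α : Γ × Γ, P α = canchor r₁ r₂ α := by
    rintro ⟨a, b⟩
    have e1 : ((a, b) : Γ × Γ) = (a, 0) + (0, b) := by simp
    rw [e1, hPadd, hPi]
    ext x <;> simp [canchor, hr₁, hr₂] <;> ring
  -- Leibniz
  have hLeib : ∀ (a c : Γ) (f : S),
      b₁ a (f • c) = f • b₁ a c + (r₁ a f) • c ∧
      b₂ a (f • c) = f • b₂ a c + (r₂ a f) • c := by
    intro a c f
    have h := hBLeib (a, 0) (c, 0) (f, (0 : S))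
    simp [csmul, cvf] at h
    constructor
    · have := congrArg Prod.fst h
      simpa [hb₁, hr₁] using this
    · have := congrArg Prod.snd h
      simpa [hb₂, hr₂] using this
  -- Jacobi on real sections
  have hJac : ∀ a b c : Γ,
      (b₁ a (b₁ b c) + b₁ b (b₁ c a) + b₁ c (b₁ a b))
        - (b₂ a (b₂ b c) + b₂ b (b₂ c a) + b₂ c (b₂ a b)) = 0 ∧
      (b₂ a (b₁ b c) + b₂ b (b₁ c a) + b₂ c (b₁ a b))
        + (b₁ a (b₂ b c) + b₁ b (b₂ c a) + b₁ c (b₂ a b)) = 0 := by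
    intro a b c
    have h := hBJac (a, 0) (b, 0) (c, 0)
    have key : ∀ x y z : Γ, B (x, 0) (B (y, 0) (z, 0)) =
        (b₁ x (b₁ y z) - b₂ x (b₂ y z), b₂ x (b₁ y z) + b₁ x (b₂ y z)) := by
      intro x y z
      have e : B (y, 0) (z, 0) = (b₁ y z, (0 : Γ)) + ((0 : Γ), b₂ y z) := by
        rw [hb₁, hb₂]; ext <;> simp
      rw [e, hBaddr, hBi]
      ext <;> simp [hb₁, hb₂] <;> abel
    rw [key, key, key] at h
    constructor
    · have := congrArg Prod.fst h
      simp at this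
      linear_combination (norm := abel) this
    · have := congrArg Prod.snd h
      simp at this
      linear_combination (norm := abel) this
  refine ⟨?_, ?_, fun a c f => (hLeib a c f).1, fun a c f => (hLeib a c f).2,
    fun a b c => (hJac a b c).2, fun a b c => sub_eq_zero.mp (hJac a b c).1,
    hBsum, hPsum⟩
  · intro a c
    have := congrArg Prod.fst (hBanti (a, 0) (c, 0))
    simpa [hb₁] using this
  · intro a c
    have := congrArg Prod.snd (hBanti (a, 0) (c, 0))
    simpa [hb₂] using this
end
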